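/- There is a constant C such that for every w ∈ C²(ℝ_+×ℝ³), every t ≥ 0 and x ∈ ℝ³: ⟨t−r⟩ |∇_x ∂_t w(t,x)| ≤ C Σ_{|α|≤1} |∂ Γ^α w(t,x)| + C t |□w(t,x)|, where ∇_x is the spatial gradient. -/

import Mathlib

open MeasureTheory

noncomputable section

/-- The partial derivative in the `i`-th coordinate direction on `ℝⁿ`. -/
def pd {n : ℕ} (i : Fin n) (u : (Fin n → ℝ) → ℝ) : (Fin n → ℝ) → ℝ :=
  fun z => fderiv ℝ u z (Pi.single i 1)

/-- Iterated application of a family of first-order operators along a list of indices. -/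
def opIter {α γ : Type*} (F : α → γ → γ) : List α → γ → γ
  | [] => id
  | i :: L => fun u => F i (opIter F L u)

/-- The ten vector fields Γ on ℝ×ℝ³ (coordinates: `0 = t`, `1,2,3 = x`):
`∂_t, ∂_{x₁}, ∂_{x₂}, ∂_{x₃}`, the rotations `Ω_{jk} = x_j∂_k - x_k∂_j` (`1 ≤ j < k ≤ 3`)
and the boosts `Ω_{0k} = x_k∂_t + t∂_k` (`k = 1,2,3`). -/
def GammaField (i : Fin 10) (u : (Fin 4 → ℝ) → ℝ) : (Fin 4 → ℝ) → ℝ :=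
  if i.val = 0 then pd 0 u
  else if i.val = 1 then pd 1 u
  else if i.val = 2 then pd 2 u
  else if i.val = 3 then pd 3 u
  else if i.val = 4 then fun z => z 1 * pd 2 u z - z 2 * pd 1 u z
  else if i.val = 5 then fun z => z 1 * pd 3 u z - z 3 * pd 1 u z
  else if i.val = 6 then fun z => z 2 * pd 3 u z - z 3 * pd 2 u z
  else if i.val = 7 then fun z => z 1 * pd 0 u z + z 0 * pd 1 u z
  else if i.val = 8 then fun z => z 2 * pd 0 u z + z 0 * pd 2 u z
  else fun z => z 3 * pd 0 u z + z 0 * pd 3 u z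

/-- The spatial radius `r = |x|` of a space-time point. -/
def rad (z : Fin 4 → ℝ) : ℝ := Real.sqrt ((z 1)^2 + (z 2)^2 + (z 3)^2)

/-- The d'Alembertian `□ = ∂_t² - Δ` on ℝ×ℝ³. -/
def Box (u : (Fin 4 → ℝ) → ℝ) : (Fin 4 → ℝ) → ℝ :=
  fun z => pd 0 (pd 0 u) z - pd 1 (pd 1 u) z - pd 2 (pd 2 u) z - pd 3 (pd 3 u) z

/-- The `L²` norm in `x ∈ ℝ³` at fixed time `t`. -/
def L2x (f : (Fin 4 → ℝ) → ℝ) (t : ℝ) : ℝ :=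
  Real.sqrt (∫ x : Fin 3 → ℝ, (f (Fin.cons t x))^2)

/-!
The boosts `L_k = x_k∂_t + t∂_k` satisfy, pointwise,
`∂_t L_k w - ∂_k w = x_k ∂_t²w + t ∂_k∂_t w` and `∂_j L_k w - δ_jk ∂_t w = x_k ∂_j∂_t w + t ∂_j∂_k w`.
Contracting with `x` and inserting `□w = ∂_t²w - Δw` expresses `(t² - r²) ∂_t²w` and `r² ∂_j∂_t w`
through first derivatives of `Γw` and `t □w`, with coefficients of size `t + r` and `r`. Dividing
the first identity by `t + r` bounds `|t - r| |∂_t²w|`. Near the cone (`r ≤ 2t`) one then solves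
`t ∂_j∂_t w = (∂_t L_j w - ∂_j w) - x_j ∂_t²w`; away from it (`r > 2t`) one divides the second
identity by `r`, using `t ≤ |t - r|`.
-/

open Finset

section Sums

variable {ι α : Type*} [Fintype ι] [Fintype α]

theorem sum_range_two_sum_ofFn {M : Type*} [AddCommMonoid M] (g : List α → M) :
    ∑ n ∈ range 2, ∑ σ : Fin n → α, g (List.ofFn σ) = g [] + ∑ a, g [a] := by
  rw [sum_range_succ, sum_range_one, Fintype.sum_unique]
  congr 1
  exact Fintype.sum_equiv (Equiv.funUnique (Fin 1) α) _ _ fun σ => by simp [List.ofFn_succ]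

theorem abs_le_sum_abs (f : ι → ℝ) (i : ι) : |f i| ≤ ∑ j, |f j| :=
  single_le_sum (f := fun j => |f j|) (fun _ _ => abs_nonneg _) (mem_univ i)

theorem abs_le_sum_sum_abs (f : α → ι → ℝ) (a : α) (i : ι) : |f a i| ≤ ∑ b, ∑ j, |f b j| :=
  (abs_le_sum_abs (f a) i).trans <|
    single_le_sum (f := fun b => ∑ j, |f b j|) (fun _ _ => by positivity) (mem_univ a)

theorem sum_abs_diag_le (Q : ι → ι → ℝ) : ∑ k, |Q k k| ≤ ∑ j, ∑ k, |Q j k| :=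
  sum_le_sum fun j _ => abs_le_sum_abs (Q j) j

theorem sqrt_sum_sq_le_sum_abs (b : ι → ℝ) : √(∑ i, b i ^ 2) ≤ ∑ i, |b i| :=
  Real.sqrt_le_iff.mpr ⟨by positivity, by
    simpa only [sq_abs] using sum_sq_le_sq_sum_of_nonneg (s := univ) fun i _ => abs_nonneg (b i)⟩

theorem abs_le_sqrt_sum_sq (a : ι → ℝ) (k : ι) : |a k| ≤ √(∑ k, a k ^ 2) :=
  Real.abs_le_sqrt (single_le_sum (f := fun k => a k ^ 2) (fun _ _ => sq_nonneg _) (mem_univ k))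

theorem abs_sum_mul_le (a P : ι → ℝ) : |∑ k, a k * P k| ≤ √(∑ k, a k ^ 2) * ∑ k, |P k| :=
  calc |∑ k, a k * P k| ≤ ∑ k, |a k| * |P k| := by
        simpa only [abs_mul] using abs_sum_le_sum_abs (fun k => a k * P k) univ
    _ ≤ ∑ k, √(∑ k, a k ^ 2) * |P k| := by
        gcongr with k; exact abs_le_sqrt_sum_sq a k
    _ = _ := (mul_sum _ _ _).symm

end Sums

theorem sqrt_one_add_sq_le (d : ℝ) : √(1 + d ^ 2) ≤ 1 + |d| :=
  Real.sqrt_le_iff.mpr ⟨by positivity, by nlinarith [sq_abs d, abs_nonneg d]⟩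

theorem sqrt_one_add_sq_mul_sqrt_sum_sq_le {ι : Type*} [Fintype ι] (d : ℝ) (b : ι → ℝ) :
    √(1 + d ^ 2) * √(∑ i, b i ^ 2) ≤ ∑ i, |b i| + ∑ i, |d| * |b i| := by
  rw [← mul_sum, ← one_add_mul]
  exact mul_le_mul (sqrt_one_add_sq_le d) (sqrt_sum_sq_le_sum_abs b) (Real.sqrt_nonneg _)
    (by positivity)

section BoostAlgebra

/-! At a point: `a = x`, `A = ∂_t²w`, `B j = ∂_j∂_t w`, `C` the spatial Hessian,
`P k = ∂_t L_k w - ∂_k w`, `Q j k = ∂_j L_k w - δ_jk ∂_t w`, and `A - ∑ k, C k k = □w`. -/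

variable {ι : Type*} [Fintype ι]

theorem boost_time_identity (t A : ℝ) (a B P : ι → ℝ) (C Q : ι → ι → ℝ)
    (hP : ∀ k, P k = a k * A + t * B k) (hQ : ∀ j k, Q j k = a k * B j + t * C j k) :
    (t ^ 2 - ∑ k, a k ^ 2) * A =
      t * ∑ k, Q k k - ∑ k, a k * P k + t ^ 2 * (A - ∑ k, C k k) := by
  simp only [hP, hQ, mul_sum, sub_mul, sum_mul, mul_add, mul_sub, sum_add_distrib]
  ring_nf

theorem boost_space_identity (t A : ℝ) (a B : ι → ℝ) (C Q : ι → ι → ℝ)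
    (hC : ∀ j k, C j k = C k j) (hQ : ∀ j k, Q j k = a k * B j + t * C j k) (j : ι) :
    (∑ k, a k ^ 2) * B j =
      ∑ k, a k * (Q j k - Q k j) + a j * (∑ k, Q k k - t * A + t * (A - ∑ k, C k k)) := by
  simp only [hQ, hC j, mul_sum, sum_mul, mul_add, mul_sub, sum_add_distrib, sum_sub_distrib]
  ring_nf
  simp only [mul_comm, mul_left_comm]
  ring

theorem abs_sub_sqrt_mul_abs_tt_le (t A : ℝ) (a B P : ι → ℝ) (C Q : ι → ι → ℝ)
    (ht : 0 ≤ t) (hP : ∀ k, P k = a k * A + t * B k) (hQ : ∀ j k, Q j k = a k * B j + t * C j k) :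
    |t - √(∑ k, a k ^ 2)| * |A| ≤
      ∑ k, |P k| + ∑ j, ∑ k, |Q j k| + t * |A - ∑ k, C k k| := by
  set r := √(∑ k, a k ^ 2) with hr
  set D := A - ∑ k, C k k
  have hr0 : 0 ≤ r := Real.sqrt_nonneg _
  rcases (add_nonneg ht hr0).eq_or_lt with h0 | hpos
  · obtain ⟨rfl, hr'⟩ : t = 0 ∧ r = 0 := ⟨by linarith, by linarith⟩
    simp only [hr', sub_zero, abs_zero, zero_mul]
    positivity
  refine le_of_mul_le_mul_left ?_ hpos
  have hfactor : (t + r) * (|t - r| * |A|) = |(t ^ 2 - ∑ k, a k ^ 2) * A| := by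
    rw [← Real.sq_sqrt (sum_nonneg fun k _ => sq_nonneg (a k)), ← hr, abs_mul,
      show t ^ 2 - r ^ 2 = (t + r) * (t - r) by ring, abs_mul, abs_of_pos hpos]
    ring
  have hdiag := mul_le_mul_of_nonneg_left (sum_abs_diag_le Q) ht
  calc (t + r) * (|t - r| * |A|)
      = |t * ∑ k, Q k k - ∑ k, a k * P k + t ^ 2 * D| := by
        rw [hfactor, boost_time_identity t A a B P C Q hP hQ]
    _ ≤ |t * ∑ k, Q k k| + |∑ k, a k * P k| + |t ^ 2 * D| :=
        (abs_add_le _ _).trans (add_le_add_left (abs_sub _ _) _)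
    _ ≤ t * ∑ k, |Q k k| + r * ∑ k, |P k| + t ^ 2 * |D| := by
        rw [abs_mul, abs_mul, abs_of_nonneg ht, abs_of_nonneg (sq_nonneg t)]
        gcongr
        · exact abs_sum_le_sum_abs _ _
        · exact abs_sum_mul_le a P
    _ ≤ (t + r) * (∑ k, |P k| + ∑ j, ∑ k, |Q j k| + t * |D|) := by
        have := mul_nonneg ht (sum_nonneg fun k (_ : k ∈ univ) => abs_nonneg (P k))
        have := mul_nonneg hr0 (sum_nonneg fun j (_ : j ∈ univ) =>
          sum_nonneg fun k (_ : k ∈ univ) => abs_nonneg (Q j k))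
        have := mul_nonneg (mul_nonneg hr0 ht) (abs_nonneg D)
        nlinarith

theorem abs_sub_sqrt_mul_abs_tx_le_of_le (t A : ℝ) (a B P : ι → ℝ) (C Q : ι → ι → ℝ)
    (ht : 0 ≤ t) (hP : ∀ k, P k = a k * A + t * B k) (hQ : ∀ j k, Q j k = a k * B j + t * C j k)
    (j : ι) (hnear : √(∑ k, a k ^ 2) ≤ 2 * t) :
    |t - √(∑ k, a k ^ 2)| * |B j| ≤
      3 * (∑ k, |P k| + ∑ j, ∑ k, |Q j k| + t * |A - ∑ k, C k k|) := by
  set r := √(∑ k, a k ^ 2)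
  set M := ∑ k, |P k| + ∑ j, ∑ k, |Q j k| + t * |A - ∑ k, C k k|
  have hA : |t - r| * |A| ≤ M := abs_sub_sqrt_mul_abs_tt_le t A a B P C Q ht hP hQ
  have hPj : |P j| ≤ M := by
    have := abs_le_sum_abs P j
    have : 0 ≤ ∑ j, ∑ k, |Q j k| + t * |A - ∑ k, C k k| := by positivity
    simp only [M]; linarith
  rcases ht.eq_or_lt with rfl | htpos
  · have hr : r = 0 := le_antisymm (by linarith) (Real.sqrt_nonneg _)
    simp only [hr, sub_zero, abs_zero, zero_mul]
    positivity
  have htr : |t - r| ≤ t :=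
    abs_sub_le_iff.mpr ⟨by linarith [Real.sqrt_nonneg (∑ k, a k ^ 2)], by linarith⟩
  refine le_of_mul_le_mul_left ?_ htpos
  calc t * (|t - r| * |B j|) = |t - r| * |P j - a j * A| := by
        rw [hP j, add_sub_cancel_left, abs_mul, abs_of_pos htpos]
        ring
    _ ≤ |t - r| * (|P j| + |a j| * |A|) := by
        gcongr
        exact (abs_sub _ _).trans_eq (by rw [abs_mul])
    _ = |t - r| * |P j| + |a j| * (|t - r| * |A|) := by ring
    _ ≤ t * M + (2 * t) * M := by
        gcongr
        exact abs_le_sqrt_sum_sq a j |>.trans hnear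
    _ = t * (3 * M) := by ring

theorem sqrt_mul_abs_tx_le (t A : ℝ) (a B : ι → ℝ) (C Q : ι → ι → ℝ) (ht : 0 ≤ t)
    (hC : ∀ j k, C j k = C k j) (hQ : ∀ j k, Q j k = a k * B j + t * C j k) (j : ι)
    (hr : 0 < √(∑ k, a k ^ 2)) :
    √(∑ k, a k ^ 2) * |B j| ≤
      ∑ k, |Q j k| + ∑ k, |Q k j| + (∑ k, |Q k k| + t * |A| + t * |A - ∑ k, C k k|) := by
  set r := √(∑ k, a k ^ 2) with hr_def
  set D := A - ∑ k, C k k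
  refine le_of_mul_le_mul_left ?_ hr
  calc r * (r * |B j|) = |(∑ k, a k ^ 2) * B j| := by
        rw [← Real.sq_sqrt (sum_nonneg fun k _ => sq_nonneg (a k)), ← hr_def, abs_mul,
          abs_of_nonneg (sq_nonneg r)]
        ring
    _ = |∑ k, a k * (Q j k - Q k j) + a j * (∑ k, Q k k - t * A + t * D)| := by
        rw [boost_space_identity t A a B C Q hC hQ j]
    _ ≤ r * ∑ k, |Q j k - Q k j| + r * (∑ k, |Q k k| + t * |A| + t * |D|) := by
        refine (abs_add_le _ _).trans (add_le_add (abs_sum_mul_le a _) ?_)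
        rw [abs_mul]
        gcongr
        · exact abs_le_sqrt_sum_sq a j
        · refine (abs_add_le _ _).trans (add_le_add ((abs_sub _ _).trans (add_le_add
            (abs_sum_le_sum_abs _ _) ?_)) ?_) <;> rw [abs_mul, abs_of_nonneg ht]
    _ ≤ r * ∑ k, (|Q j k| + |Q k j|) + r * (∑ k, |Q k k| + t * |A| + t * |D|) := by
        gcongr with k
        exact abs_sub _ _
    _ = r * (∑ k, |Q j k| + ∑ k, |Q k j| + (∑ k, |Q k k| + t * |A| + t * |D|)) := by
        rw [sum_add_distrib]
        ring

theorem abs_sub_sqrt_mul_abs_tx_le_of_lt (t A : ℝ) (a B P : ι → ℝ) (C Q : ι → ι → ℝ)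
    (ht : 0 ≤ t) (hC : ∀ j k, C j k = C k j) (hP : ∀ k, P k = a k * A + t * B k)
    (hQ : ∀ j k, Q j k = a k * B j + t * C j k) (j : ι) (hfar : 2 * t < √(∑ k, a k ^ 2)) :
    |t - √(∑ k, a k ^ 2)| * |B j| ≤
      5 * (∑ k, |P k| + ∑ j, ∑ k, |Q j k| + t * |A - ∑ k, C k k|) := by
  set r := √(∑ k, a k ^ 2)
  set D := A - ∑ k, C k k
  set SQ := ∑ j, ∑ k, |Q j k|
  have hrpos : 0 < r := by linarith
  have htr : |t - r| = r - t := by rw [abs_sub_comm, abs_of_pos (by linarith)]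
  have htA : t * |A| ≤ ∑ k, |P k| + SQ + t * |D| :=
    (mul_le_mul_of_nonneg_right (by linarith) (abs_nonneg A)).trans
      (htr ▸ abs_sub_sqrt_mul_abs_tt_le t A a B P C Q ht hP hQ)
  have hrow : ∑ k, |Q j k| ≤ SQ :=
    single_le_sum (f := fun j => ∑ k, |Q j k|) (fun _ _ => by positivity) (mem_univ j)
  have hcol : ∑ k, |Q k j| ≤ SQ := sum_le_sum fun k _ => abs_le_sum_abs (Q k) j
  have hdiag : ∑ k, |Q k k| ≤ SQ := sum_abs_diag_le Q
  have hP0 : 0 ≤ ∑ k, |P k| := by positivity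
  have hD0 : 0 ≤ t * |D| := by positivity
  have hQ0 : 0 ≤ SQ := by positivity
  rw [htr]
  calc (r - t) * |B j| ≤ r * |B j| := by gcongr; linarith
    _ ≤ _ := sqrt_mul_abs_tx_le t A a B C Q ht hC hQ j hrpos
    _ ≤ 5 * (∑ k, |P k| + SQ + t * |D|) := by linarith

theorem abs_sub_sqrt_mul_abs_tx_le (t A : ℝ) (a B P : ι → ℝ) (C Q : ι → ι → ℝ)
    (ht : 0 ≤ t) (hC : ∀ j k, C j k = C k j) (hP : ∀ k, P k = a k * A + t * B k)
    (hQ : ∀ j k, Q j k = a k * B j + t * C j k) (j : ι) :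
    |t - √(∑ k, a k ^ 2)| * |B j| ≤
      5 * (∑ k, |P k| + ∑ j, ∑ k, |Q j k| + t * |A - ∑ k, C k k|) := by
  rcases le_or_gt (√(∑ k, a k ^ 2)) (2 * t) with hnear | hfar
  · refine (abs_sub_sqrt_mul_abs_tx_le_of_le t A a B P C Q ht hP hQ j hnear).trans ?_
    gcongr
    norm_num
  · exact abs_sub_sqrt_mul_abs_tx_le_of_lt t A a B P C Q ht hC hP hQ j hfar

end BoostAlgebra

section PartialDerivatives

variable {n : ℕ}

theorem differentiableAt_pd {u : (Fin n → ℝ) → ℝ} (hu : ContDiff ℝ 2 u) (i : Fin n)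
    (z : Fin n → ℝ) : DifferentiableAt ℝ (pd i u) z :=
  (((hu.fderiv_right le_rfl).clm_apply contDiff_const).differentiable one_ne_zero).differentiableAt

theorem pd_pd_comm {u : (Fin n → ℝ) → ℝ} (hu : ContDiff ℝ 2 u) (i j : Fin n) (z : Fin n → ℝ) :
    pd i (pd j u) z = pd j (pd i u) z := by
  have hd : DifferentiableAt ℝ (fderiv ℝ u) z :=
    ((hu.fderiv_right le_rfl).differentiable one_ne_zero).differentiableAt
  have hsnd : ∀ a b : Fin n,
      pd a (pd b u) z = fderiv ℝ (fderiv ℝ u) z (Pi.single a 1) (Pi.single b 1) := fun a b => by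
    change fderiv ℝ (fun y => fderiv ℝ u y (Pi.single b 1)) z (Pi.single a 1) = _
    rw [fderiv_clm_apply hd (differentiableAt_const _)]
    simp
  rw [hsnd, hsnd]
  exact hu.contDiffAt.isSymmSndFDerivAt (by simp) _ _

theorem pd_coord_mul_add {g h : (Fin n → ℝ) → ℝ} {z : Fin n → ℝ} (hg : DifferentiableAt ℝ g z)
    (hh : DifferentiableAt ℝ h z) (a b i : Fin n) :
    pd i (fun y => y a * g y + y b * h y) z =
      (Pi.single i 1 : Fin n → ℝ) a * g z + z a * pd i g z +
        ((Pi.single i 1 : Fin n → ℝ) b * h z + z b * pd i h z) := by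
  have H : HasFDerivAt (fun y => y a * g y + y b * h y) _ z :=
    ((hasFDerivAt_apply a z).mul hg.hasFDerivAt).add ((hasFDerivAt_apply b z).mul hh.hasFDerivAt)
  rw [pd, H.fderiv]
  simp only [add_apply, smul_apply, smul_eq_mul, ContinuousLinearMap.proj_apply, pd]
  ring

end PartialDerivatives

def boostIndex (k : Fin 3) : Fin 10 := ⟨k + 7, by omega⟩

theorem GammaField_boostIndex (k : Fin 3) (u : (Fin 4 → ℝ) → ℝ) :
    GammaField (boostIndex k) u = fun z => z k.succ * pd 0 u z + z 0 * pd k.succ u z := by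
  fin_cases k <;> rfl

theorem time_pd_GammaField_boostIndex {u : (Fin 4 → ℝ) → ℝ} (hu : ContDiff ℝ 2 u) (k : Fin 3)
    (z : Fin 4 → ℝ) :
    pd 0 (GammaField (boostIndex k) u) z - pd k.succ u z =
      z k.succ * pd 0 (pd 0 u) z + z 0 * pd k.succ (pd 0 u) z := by
  rw [GammaField_boostIndex,
    pd_coord_mul_add (differentiableAt_pd hu 0 z) (differentiableAt_pd hu k.succ z),
    pd_pd_comm hu 0 k.succ]
  simp only [ne_eq, Fin.succ_ne_zero, not_false_eq_true, Pi.single_eq_of_ne, zero_mul, zero_add,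
    Pi.single_eq_same, one_mul]
  ring

theorem space_pd_GammaField_boostIndex {u : (Fin 4 → ℝ) → ℝ} (hu : ContDiff ℝ 2 u) (j k : Fin 3)
    (z : Fin 4 → ℝ) :
    pd j.succ (GammaField (boostIndex k) u) z - (if j = k then pd 0 u z else 0) =
      z k.succ * pd j.succ (pd 0 u) z + z 0 * pd j.succ (pd k.succ u) z := by
  rw [GammaField_boostIndex,
    pd_coord_mul_add (differentiableAt_pd hu 0 z) (differentiableAt_pd hu k.succ z)]
  simp only [Pi.single_apply, Fin.succ_inj, (Fin.succ_ne_zero _).symm, if_false, eq_comm (a := k),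
    ite_mul, one_mul, zero_mul]
  ring

theorem abs_sub_sqrt_mul_abs_pd_pd_le {w : (Fin 4 → ℝ) → ℝ} (hw : ContDiff ℝ 2 w) {t : ℝ}
    (ht : 0 ≤ t) (x : Fin 3 → ℝ) (j : Fin 3) :
    |t - √(∑ k, x k ^ 2)| * |pd j.succ (pd 0 w) (Fin.cons t x)| ≤
      60 * (∑ i, |pd i w (Fin.cons t x)| +
        ∑ γ, ∑ i, |pd i (GammaField γ w) (Fin.cons t x)|) + 5 * t * |Box w (Fin.cons t x)| := by
  set z : Fin 4 → ℝ := Fin.cons t x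
  set S := ∑ i, |pd i w z| + ∑ γ, ∑ i, |pd i (GammaField γ w) z| with hS
  have hS0 : ∀ i, |pd i w z| ≤ ∑ i, |pd i w z| := abs_le_sum_abs (fun i => pd i w z)
  have hS1 : ∀ γ i, |pd i (GammaField γ w) z| ≤ ∑ γ, ∑ i, |pd i (GammaField γ w) z| :=
    abs_le_sum_sum_abs (fun γ i => pd i (GammaField γ w) z)
  set P : Fin 3 → ℝ := fun k => pd 0 (GammaField (boostIndex k) w) z - pd k.succ w z
  set Q : Fin 3 → Fin 3 → ℝ := fun j k =>
    pd j.succ (GammaField (boostIndex k) w) z - if j = k then pd 0 w z else 0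
  have hP : ∀ k, P k = x k * pd 0 (pd 0 w) z + t * pd k.succ (pd 0 w) z := fun k => by
    simpa [z] using time_pd_GammaField_boostIndex hw k z
  have hQ : ∀ j k, Q j k = x k * pd j.succ (pd 0 w) z + t * pd j.succ (pd k.succ w) z :=
    fun j k => by simpa [z] using space_pd_GammaField_boostIndex hw j k z
  have hC : ∀ j k : Fin 3, pd j.succ (pd k.succ w) z = pd k.succ (pd j.succ w) z :=
    fun j k => pd_pd_comm hw _ _ z
  have hBox : Box w z = pd 0 (pd 0 w) z - ∑ k : Fin 3, pd k.succ (pd k.succ w) z := by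
    simp only [Box, Fin.sum_univ_three, sub_add_eq_sub_sub]
    rfl
  have hPS : ∀ k, |P k| ≤ S := fun k =>
    (abs_sub _ _).trans (by linarith [hS1 (boostIndex k) 0, hS0 k.succ])
  have hQS : ∀ j k, |Q j k| ≤ S := fun j k => by
    refine (abs_sub _ _).trans ?_
    have : |if j = k then pd 0 w z else 0| ≤ |pd 0 w z| := by split_ifs <;> simp
    linarith [hS1 (boostIndex k) j.succ, hS0 0]
  have hsumP : ∑ k, |P k| ≤ 3 * S := by
    simpa using sum_le_sum fun k (_ : k ∈ univ) => hPS k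
  have hsumQ : ∑ j, ∑ k, |Q j k| ≤ 9 * S := by
    have := sum_le_sum fun j (_ : j ∈ univ) => sum_le_sum fun k (_ : k ∈ univ) => hQS j k
    simp only [sum_const, card_univ, Fintype.card_fin, nsmul_eq_mul, Nat.cast_ofNat] at this
    linarith
  calc |t - √(∑ k, x k ^ 2)| * |pd j.succ (pd 0 w) z|
      ≤ 5 * (∑ k, |P k| + ∑ j, ∑ k, |Q j k| + t * |Box w z|) := by
        rw [hBox]
        exact abs_sub_sqrt_mul_abs_tx_le t _ x _ P _ Q ht hC hP hQ j
    _ ≤ 60 * S + 5 * t * |Box w z| := by linarith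

/-- Klainerman–Sideris type pointwise estimate: there is a constant `C` such
that for every `w ∈ C²(ℝ₊×ℝ³)`, every `t ≥ 0` and `x ∈ ℝ³`,
`⟨t-r⟩ |∇_x ∂_t w(t,x)| ≤ C Σ_{|α|≤1} |∂Γ^α w(t,x)| + C t |□w(t,x)|`. -/
theorem stmt7 :
    ∃ C : ℝ, 0 < C ∧
      ∀ w : (Fin 4 → ℝ) → ℝ, ContDiff ℝ 2 w →
        ∀ t : ℝ, 0 ≤ t → ∀ x : Fin 3 → ℝ,
          Real.sqrt (1 + (t - Real.sqrt ((x 0)^2 + (x 1)^2 + (x 2)^2))^2) *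
              Real.sqrt ((pd 1 (pd 0 w) (Fin.cons t x))^2 + (pd 2 (pd 0 w) (Fin.cons t x))^2 +
                (pd 3 (pd 0 w) (Fin.cons t x))^2) ≤
            C * (∑ n ∈ Finset.range 2, ∑ σ : Fin n → Fin 10, ∑ i : Fin 4,
                  |pd i (opIter GammaField (List.ofFn σ) w) (Fin.cons t x)|) +
            C * t * |Box w (Fin.cons t x)| := by
  refine ⟨200, by norm_num, fun w hw t ht x => ?_⟩
  set z : Fin 4 → ℝ := Fin.cons t x
  set S := ∑ i, |pd i w z| + ∑ γ, ∑ i, |pd i (GammaField γ w) z|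
  have hsum : ∑ n ∈ range 2, ∑ σ : Fin n → Fin 10, ∑ i : Fin 4,
      |pd i (opIter GammaField (List.ofFn σ) w) z| = S :=
    sum_range_two_sum_ofFn fun L => ∑ i, |pd i (opIter GammaField L w) z|
  -- `GammaField 0 = pd 0`, so `∂_j∂_t w` is itself one of the terms `∂Γw`.
  have hB : ∀ j : Fin 3, |pd j.succ (pd 0 w) z| ≤ S := fun j =>
    (abs_le_sum_sum_abs (fun γ i => pd i (GammaField γ w) z) 0 j.succ).trans
      (le_add_of_nonneg_left (by positivity))
  have hnorm : pd 1 (pd 0 w) z ^ 2 + pd 2 (pd 0 w) z ^ 2 + pd 3 (pd 0 w) z ^ 2 =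
      ∑ j : Fin 3, pd j.succ (pd 0 w) z ^ 2 := by
    rw [Fin.sum_univ_three]
    rfl
  rw [← Fin.sum_univ_three (fun k => x k ^ 2), hnorm, hsum]
  have hS : 0 ≤ S := by positivity
  have hBox : 0 ≤ t * |Box w z| := by positivity
  calc _ ≤ ∑ j : Fin 3, |pd j.succ (pd 0 w) z| +
        ∑ j : Fin 3, |t - √(∑ k, x k ^ 2)| * |pd j.succ (pd 0 w) z| :=
        sqrt_one_add_sq_mul_sqrt_sum_sq_le _ _
    _ ≤ ∑ j : Fin 3, S + ∑ j : Fin 3, (60 * S + 5 * t * |Box w z|) := by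
        gcongr with j
        · exact hB j
        · exact abs_sub_sqrt_mul_abs_pd_pd_le hw ht x j
    _ ≤ 200 * S + 200 * t * |Box w z| := by
        simp only [sum_const, card_univ, Fintype.card_fin, nsmul_eq_mul, Nat.cast_ofNat]
        linarith
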